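/- A simplicial complex X has the disc local injectivity property up to dimension 0 if and only if X is nonempty, connected, and has more than one vertex. -/

import Mathlib

/-! Shared simplicial-complex framework. -/

/-- The model `m`-sphere, for an integer `m`; it is empty when `m < 0`,
and is the unit sphere in `ℝ^{m+1}` when `m ≥ 0`. -/
def sphereSpace (m : ℤ) : Type :=
  {x : EuclideanSpace ℝ (Fin (m + 1).toNat) // ‖x‖ = 1 ∧ 0 ≤ m}

noncomputable instance (m : ℤ) : TopologicalSpace (sphereSpace m) := by
  unfold sphereSpace; infer_instance

/-- The model `m`-disc: empty for `m < 0`, a point for `m = 0`,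
the closed unit ball in `ℝ^m` for `m ≥ 0`. -/
def discSpace (m : ℤ) : Type :=
  {x : EuclideanSpace ℝ (Fin m.toNat) // ‖x‖ ≤ 1 ∧ 0 ≤ m}

noncomputable instance (m : ℤ) : TopologicalSpace (discSpace m) := by
  unfold discSpace; infer_instance

/-- The inclusion of the model `m`-sphere as the boundary of the model `(m+1)`-disc. -/
noncomputable local instance (priority := low) (α : Type*) : DecidableEq α :=
  fun _ _ => Classical.propDecidable _

def sphereToDisc (m : ℤ) (x : sphereSpace m) : discSpace (m + 1) :=
  ⟨x.1, le_of_eq x.2.1, by have := x.2.2; omega⟩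

/-- An abstract simplicial complex on a vertex set `V`: a collection of nonempty
finite subsets of `V` closed under passing to nonempty subsets. -/
def IsComplex {V : Type*} (K : Set (Finset V)) : Prop :=
  ∀ σ ∈ K, σ ≠ ∅ ∧ ∀ τ ⊆ σ, τ ≠ ∅ → τ ∈ K

/-- The link of a simplex `σ` in `K`. -/
def link {V : Type*} (K : Set (Finset V)) (σ : Finset V) : Set (Finset V) :=
  {τ | τ ∈ K ∧ Disjoint σ τ ∧ σ ∪ τ ∈ K}

/-- The geometric realization of `K`: formal convex combinations of vertices
supported on a simplex of `K`. -/
def spc {V : Type*} (K : Set (Finset V)) : Type _ :=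
  {w : V →₀ ℝ // w.support ∈ K ∧ (∀ v, 0 ≤ w v) ∧ (w.sum fun _ c => c) = 1}

instance {V : Type*} (K : Set (Finset V)) : TopologicalSpace (spc K) :=
  TopologicalSpace.induced (fun w => ((w.1 : V →₀ ℝ) : V → ℝ)) inferInstance

/-- A simplicial map from `K` to `X`, given on vertices by `f`. -/
def IsSimplicial {V U : Type*} (K : Set (Finset V)) (X : Set (Finset U)) (f : V → U) : Prop :=
  ∀ σ ∈ K, σ.image f ∈ X

/-- `f` is locally injective on `K`: it preserves dimensions of simplices. -/
def LocInj {V U : Type*} (K : Set (Finset V)) (f : V → U) : Prop :=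
  ∀ σ ∈ K, (σ.image f).card = σ.card

/-- `K` is a combinatorial triangulation of the `m`-sphere. -/
def IsCombTriSphere {V : Type*} (m : ℤ) (K : Set (Finset V)) : Prop :=
  IsComplex K ∧ Nonempty (spc K ≃ₜ sphereSpace m) ∧
    ∀ σ ∈ K, Nonempty (spc (link K σ) ≃ₜ sphereSpace (m - σ.card))

/-- `K` is a combinatorial triangulation of the `m`-disc. -/
def IsCombTriDisc {V : Type*} (m : ℤ) (K : Set (Finset V)) : Prop :=
  IsComplex K ∧ Nonempty (spc K ≃ₜ discSpace m) ∧
    ∀ σ ∈ K, Nonempty (spc (link K σ) ≃ₜ sphereSpace (m - σ.card)) ∨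
      Nonempty (spc (link K σ) ≃ₜ discSpace (m - σ.card))

/-- The boundary of a combinatorial triangulation of the `m`-disc:
the simplices whose link is not a sphere of the complementary dimension. -/
def discBoundary {V : Type*} (m : ℤ) (K : Set (Finset V)) : Set (Finset V) :=
  {σ ∈ K | ¬ Nonempty (spc (link K σ) ≃ₜ sphereSpace (m - σ.card))}

/-- The locally injective simplicial map `f` from a triangulated `m`-sphere `K` to `X`
extends to a locally injective simplicial map on a combinatorial triangulation of the
`(m+1)`-disc whose boundary is `K`. -/
def ExtendsToDisc {U V : Type} (X : Set (Finset U)) (m : ℤ) (K : Set (Finset V))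
    (f : V → U) : Prop :=
  ∃ (W : Type) (L : Set (Finset W)) (j : V → W) (F : W → U),
    IsCombTriDisc (m + 1) L ∧ Function.Injective j ∧
    (∀ σ ∈ K, σ.image j ∈ L) ∧
    ((fun σ : Finset V => σ.image j) '' K = discBoundary (m + 1) L) ∧
    (∀ v, F (j v) = f v) ∧ IsSimplicial L X F ∧ LocInj L F

/-- `X` has the disc local injectivity property up to dimension `d`. -/
def HasDiscLII {U : Type} (X : Set (Finset U)) (d : ℤ) : Prop :=
  ∀ m : ℤ, m ≤ d → ∀ (V : Type) (K : Set (Finset V)) (f : V → U),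
    IsCombTriSphere m K → IsSimplicial K X f → LocInj K f → ExtendsToDisc X m K f

/-- The continuous map `G` realizes the simplicial map `g`. -/
def Realizes {V U : Type} (K : Set (Finset V)) (X : Set (Finset U)) (g : V → U)
    (G : C(spc K, spc X)) : Prop :=
  ∀ w : spc K, ((G w).1 : U →₀ ℝ) = Finsupp.mapDomain g w.1

/-- `X` has the sphere local injectivity property up to dimension `d`. -/
def HasSphereLII {U : Type} (X : Set (Finset U)) (d : ℤ) : Prop :=
  ∀ m : ℤ, m ≤ d → ∀ f : C(sphereSpace m, spc X),
    ∃ (V : Type) (K : Set (Finset V)) (g : V → U) (e : spc K ≃ₜ sphereSpace m)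
      (G : C(spc K, spc X)),
      IsCombTriSphere m K ∧ IsSimplicial K X g ∧ LocInj K g ∧ Realizes K X g G ∧
      (f.comp (e : C(spc K, sphereSpace m))).Homotopic G

/-- A space is `d`-connected (`d ∈ ℤ`): every map from a sphere of dimension `≤ d`
extends over the disc. -/
def DConnected (X : Type*) [TopologicalSpace X] (d : ℤ) : Prop :=
  ∀ m : ℤ, m ≤ d → ∀ f : C(sphereSpace m, X),
    ∃ F : C(discSpace (m + 1), X), ∀ x, F (sphereToDisc m x) = f x

/-- `K` is weakly Cohen–Macaulay of dimension `d`. -/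
def WCM {V : Type*} (K : Set (Finset V)) (d : ℤ) : Prop :=
  DConnected (spc K) (d - 1) ∧ ∀ σ ∈ K, DConnected (spc (link K σ)) (d - σ.card - 1)

/-!
In dimension `-1` the empty sphere must bound a point, so `X` is nonempty. In dimension `0` the
two-point sphere on vertices `u, u'` must bound a triangulated segment; the segment is connected,
so it carries an edge path between its endpoints, and a locally injective simplicial map sends it
to an edge path of positive length from `u` to `u'` in the 1-skeleton of `X`. Conversely such an
edge path `u = x₀, x₁, …, xₙ = u'` is a locally injective simplicial map of the segment subdivided
into `n ≥ 1` edges, which is a combinatorial 1-disc. Finally, edge paths of positive length between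
all pairs of vertices exist exactly when `X` is nonempty, connected and has two vertices: when
`u = u'` the path goes out to a neighbour and back.
-/

lemma Finset.eq_of_subset_pair {α : Type*} [DecidableEq α] {τ : Finset α} {x y : α}
    (h : τ ⊆ {x, y}) (hne : τ ≠ ∅) : τ = {x} ∨ τ = {y} ∨ τ = {x, y} := by
  rw [← Finset.coe_subset, Finset.coe_pair,
    Set.Nonempty.subset_pair_iff_eq (Finset.coe_nonempty.2 (Finset.nonempty_iff_ne_empty.2 hne))]
    at h
  simpa only [← Finset.coe_insert, ← Finset.coe_singleton, Finset.coe_inj] using h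

section Realization

variable {V : Type*} {K : Set (Finset V)}

lemma singleton_mem_of_mem (hK : IsComplex K) {σ : Finset V} (hσ : σ ∈ K) {v : V}
    (hv : v ∈ σ) : ({v} : Finset V) ∈ K :=
  (hK σ hσ).2 _ (Finset.singleton_subset_iff.2 hv) (Finset.singleton_ne_empty v)

lemma support_mem_of_subset (hK : IsComplex K) {σ : Finset V} (hσ : σ ∈ K) {w : V →₀ ℝ}
    (hw : w.support ⊆ σ) (h1 : (w.sum fun _ c => c) = 1) : w.support ∈ K := by
  refine (hK σ hσ).2 _ hw fun h0 => ?_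
  simp [Finsupp.sum, h0] at h1

lemma spc.support_nonempty (w : spc K) : w.1.support.Nonempty := by
  by_contra h
  have h1 := w.2.2.2
  simp_all [Finsupp.sum]

lemma continuous_spc_apply (v : V) : Continuous fun w : spc K => w.1 v :=
  (continuous_apply v).comp continuous_induced_dom

lemma continuous_to_spc {α : Type*} [TopologicalSpace α] {g : α → spc K}
    (h : ∀ v, Continuous fun x => (g x).1 v) : Continuous g :=
  continuous_induced_rng.2 (continuous_pi h)

instance : T2Space (spc K) :=
  (Topology.IsEmbedding.mk ⟨rfl⟩ fun _ _ h => Subtype.ext (DFunLike.coe_injective h) :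
    Topology.IsEmbedding fun w : spc K => ((w.1 : V →₀ ℝ) : V → ℝ)).t2Space

noncomputable def spc.vertex {v : V} (hv : ({v} : Finset V) ∈ K) : spc K :=
  ⟨Finsupp.single v 1, by rwa [Finsupp.support_single v one_ne_zero],
    fun u => by rw [Finsupp.single_apply]; split_ifs <;> norm_num,
    Finsupp.sum_single_index rfl⟩

@[simp] lemma spc.coe_vertex {v : V} (hv : ({v} : Finset V) ∈ K) :
    (spc.vertex hv).1 = Finsupp.single v 1 := rfl

lemma spc.vertex_inj {u v : V} {hu : ({u} : Finset V) ∈ K} {hv : ({v} : Finset V) ∈ K} :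
    spc.vertex hu = spc.vertex hv ↔ u = v := by
  refine ⟨fun h => ?_, fun h => by subst h; rfl⟩
  have := congrArg (fun w : spc K => w.1 u) h
  by_contra huv
  simp [spc.vertex, huv] at this

lemma spc.eq_vertex {w : spc K} {v : V} (h : w.1.support = {v}) :
    w = spc.vertex (K := K) (h ▸ w.2.1) := by
  have h1 := w.2.2.2
  rw [Finsupp.sum, h, Finset.sum_singleton] at h1
  refine Subtype.ext (Finsupp.ext fun u => ?_)
  by_cases hu : u = v
  · subst hu; simpa [spc.vertex] using h1
  · have : u ∉ w.1.support := by simp [h, hu]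
    simpa [spc.vertex, Finsupp.single_apply, Ne.symm hu] using this

lemma spc.eq_single_add_single (w : spc K) {a b : V} (hab : a ≠ b)
    (h : w.1.support ⊆ {a, b}) :
    w.1 = Finsupp.single a (1 - w.1 b) + Finsupp.single b (w.1 b) := by
  have h1 := w.2.2.2
  rw [Finsupp.sum_of_support_subset _ h _ fun _ _ => rfl, Finset.sum_pair hab] at h1
  ext v
  by_cases hva : v = a
  · subst hva; simp [hab.symm]; linarith
  by_cases hvb : v = b
  · subst hvb; simp [hab]
  · have : v ∉ w.1.support := fun hv => by simpa [hva, hvb] using h hv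
    simp_all

lemma eq_empty_of_isEmpty_spc (hK : IsComplex K) [IsEmpty (spc K)] : K = ∅ := by
  refine Set.eq_empty_of_forall_notMem fun σ hσ => ?_
  obtain ⟨v, hv⟩ := Finset.nonempty_of_ne_empty (hK σ hσ).1
  exact IsEmpty.false (spc.vertex (singleton_mem_of_mem hK hσ hv))

instance : IsEmpty (spc (∅ : Set (Finset V))) := ⟨fun w => w.2.1⟩

lemma joined_of_support_subset (hK : IsComplex K) {σ : Finset V} (hσ : σ ∈ K) {w₁ w₂ : spc K}
    (h₁ : w₁.1.support ⊆ σ) (h₂ : w₂.1.support ⊆ σ) : Joined w₁ w₂ := by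
  let seg (t : unitInterval) : V →₀ ℝ := (1 - (t : ℝ)) • w₁.1 + (t : ℝ) • w₂.1
  have hsum (t : unitInterval) : ((seg t).sum fun _ c => c) = 1 := by
    rw [Finsupp.sum_add_index' (fun _ => rfl) (fun _ _ _ => rfl),
      Finsupp.sum_smul_index' (fun _ => rfl), Finsupp.sum_smul_index' (fun _ => rfl)]
    simp only [smul_eq_mul, ← Finsupp.mul_sum, w₁.2.2.2, w₂.2.2.2]
    ring
  have hsupp (t : unitInterval) : (seg t).support ⊆ σ :=
    Finsupp.support_add.trans <| Finset.union_subset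
      (Finsupp.support_smul.trans h₁) (Finsupp.support_smul.trans h₂)
  have hnonneg (t : unitInterval) (v : V) : 0 ≤ seg t v := by
    have := w₁.2.2.1 v; have := w₂.2.2.1 v; have := t.2.1; have := t.2.2
    simp only [seg, Finsupp.add_apply, Finsupp.smul_apply, smul_eq_mul]
    nlinarith
  refine ⟨{ toFun := fun t => ⟨seg t, support_mem_of_subset hK hσ (hsupp t) (hsum t),
              hnonneg t, hsum t⟩
            continuous_toFun := continuous_to_spc fun v => ?_
            source' := ?_
            target' := ?_ }⟩
  · simp only [seg, Finsupp.add_apply, Finsupp.smul_apply, smul_eq_mul]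
    fun_prop
  · exact Subtype.ext (by simp [seg])
  · exact Subtype.ext (by simp [seg])

end Realization

section EdgeGraph

variable {V : Type*} {K : Set (Finset V)}

def edgeGraph (K : Set (Finset V)) : SimpleGraph V where
  Adj a b := a ≠ b ∧ ({a, b} : Finset V) ∈ K
  symm := ⟨fun a b h => ⟨h.1.symm, Finset.pair_comm a b ▸ h.2⟩⟩
  loopless := ⟨fun _ h => h.1 rfl⟩

def NontrivialWalkConnected (K : Set (Finset V)) : Prop :=
  ∀ u v, ({u} : Finset V) ∈ K → ({v} : Finset V) ∈ K →
    ∃ p : (edgeGraph K).Walk u v, p.length ≠ 0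

lemma singleton_mem_of_adj (hK : IsComplex K) {u v : V} (h : (edgeGraph K).Adj u v) :
    ({u} : Finset V) ∈ K :=
  singleton_mem_of_mem hK h.2 (Finset.mem_insert_self u {v})

lemma edgeGraph_adj_of_mem (hK : IsComplex K) {σ : Finset V} (hσ : σ ∈ K) {u v : V}
    (hu : u ∈ σ) (hv : v ∈ σ) (huv : u ≠ v) : (edgeGraph K).Adj u v :=
  ⟨huv, (hK σ hσ).2 _ (Finset.insert_subset hu (Finset.singleton_subset_iff.2 hv))
    (Finset.insert_ne_empty u {v})⟩

lemma joined_vertex_of_mem_support (hK : IsComplex K) (w : spc K) {v : V}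
    (hv : v ∈ w.1.support) : Joined w (spc.vertex (singleton_mem_of_mem hK w.2.1 hv)) :=
  joined_of_support_subset hK w.2.1 le_rfl (by simpa [spc.vertex] using hv)

lemma joined_vertex_of_walk (hK : IsComplex K) {u v : V} (p : (edgeGraph K).Walk u v)
    (hu : ({u} : Finset V) ∈ K) (hv : ({v} : Finset V) ∈ K) :
    Joined (spc.vertex hu) (spc.vertex hv) := by
  induction p with
  | nil => rfl
  | @cons u w v huw p ih =>
    have hw := singleton_mem_of_adj hK huw.symm
    refine Joined.trans ?_ (ih hw hv)
    refine joined_of_support_subset hK huw.2 ?_ ?_ <;> simp [spc.vertex]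

lemma connectedSpace_spc (hK : IsComplex K) (hne : K.Nonempty)
    (h : ∀ u v, ({u} : Finset V) ∈ K → ({v} : Finset V) ∈ K → (edgeGraph K).Reachable u v) :
    ConnectedSpace (spc K) := by
  obtain ⟨σ, hσ⟩ := hne
  obtain ⟨u, hu⟩ := Finset.nonempty_of_ne_empty (hK σ hσ).1
  have : PathConnectedSpace (spc K) := by
    refine ⟨⟨spc.vertex (singleton_mem_of_mem hK hσ hu)⟩, fun w₁ w₂ => ?_⟩
    obtain ⟨v₁, hv₁⟩ := spc.support_nonempty w₁
    obtain ⟨v₂, hv₂⟩ := spc.support_nonempty w₂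
    obtain ⟨p⟩ :=
      h v₁ v₂ (singleton_mem_of_mem hK w₁.2.1 hv₁) (singleton_mem_of_mem hK w₂.2.1 hv₂)
    exact ((joined_vertex_of_mem_support hK w₁ hv₁).trans
      (joined_vertex_of_walk hK p _ _)).trans (joined_vertex_of_mem_support hK w₂ hv₂).symm
  infer_instance

/-- The vertices reachable from `a` carry a clopen set of points: the support of a point is a
simplex, whose vertices are pairwise adjacent, so it lies either inside or outside that set. -/
lemma reachable_of_connectedSpace (hK : IsComplex K) [ConnectedSpace (spc K)] {a b : V}
    (ha : ({a} : Finset V) ∈ K) (hb : ({b} : Finset V) ∈ K) : (edgeGraph K).Reachable a b := by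
  set S := {v | (edgeGraph K).Reachable a v}
  have hsupp (w : spc K) : (∃ v ∈ S, w.1 v ≠ 0) ↔ ∀ v ∉ S, w.1 v = 0 := by
    obtain ⟨u, hu⟩ := spc.support_nonempty w
    constructor
    · rintro ⟨v, hvS, hv⟩ v' hv'S
      by_contra hv'
      refine hv'S (hvS.trans (edgeGraph_adj_of_mem hK w.2.1 (Finsupp.mem_support_iff.2 hv)
        (Finsupp.mem_support_iff.2 hv') fun h => hv'S (h ▸ hvS)).reachable)
    · intro h
      by_contra! h'
      exact Finsupp.mem_support_iff.1 hu (by_cases (h' u) (h u))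
  set A := ⋃ v ∈ S, {w : spc K | w.1 v ≠ 0}
  have hopen : IsOpen A :=
    isOpen_biUnion fun v _ => isOpen_ne_fun (continuous_spc_apply v) continuous_const
  have hclosed : IsClosed A := by
    have : A = ⋂ v ∈ Sᶜ, {w : spc K | w.1 v = 0} := by
      ext w
      simpa [A] using hsupp w
    rw [this]
    exact isClosed_biInter fun v _ => isClosed_eq (continuous_spc_apply v) continuous_const
  have hA : A = Set.univ := IsClopen.eq_univ ⟨hclosed, hopen⟩
    ⟨spc.vertex ha, Set.mem_biUnion (SimpleGraph.Reachable.refl a) (by simp)⟩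
  obtain ⟨v, hvS, hv⟩ := Set.mem_iUnion₂.1 (hA ▸ Set.mem_univ (spc.vertex hb))
  have : v = b := by by_contra h; simp [Ne.symm h] at hv
  exact this ▸ hvS

def edgeGraphHom {U : Type*} {X : Set (Finset U)} {F : V → U} (hF : IsSimplicial K X F)
    (hloc : LocInj K F) : edgeGraph K →g edgeGraph X where
  toFun := F
  map_rel' {a b} h := by
    have hcard := hloc _ h.2
    simp only [Finset.image_insert, Finset.image_singleton, Finset.card_pair h.1] at hcard
    refine ⟨fun hab => ?_, by simpa using hF _ h.2⟩
    simp [hab] at hcard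

end EdgeGraph

section ModelSpaces

lemma isEmpty_sphereSpace {m : ℤ} (hm : m < 0) : IsEmpty (sphereSpace m) :=
  ⟨fun x => absurd x.2.2 (not_le.2 hm)⟩

lemma isEmpty_discSpace {m : ℤ} (hm : m < 0) : IsEmpty (discSpace m) :=
  ⟨fun x => absurd x.2.2 (not_le.2 hm)⟩

instance (m : ℤ) : T2Space (sphereSpace m) := by unfold sphereSpace; infer_instance

instance (m : ℤ) : T2Space (discSpace m) := by unfold discSpace; infer_instance

noncomputable def euclideanFinOneIsometry : EuclideanSpace ℝ (Fin 1) ≃ₗᵢ[ℝ] ℝ :=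
  (OrthonormalBasis.singleton (Fin 1) ℝ).repr.symm

lemma card_sphereSpace_zero : Nat.card (sphereSpace 0) = 2 := by
  have e : sphereSpace 0 ≃ ({1, -1} : Set ℝ) :=
    Equiv.subtypeEquiv (p := fun x : EuclideanSpace ℝ (Fin 1) => ‖x‖ = 1 ∧ (0 : ℤ) ≤ 0)
      euclideanFinOneIsometry.toEquiv fun x => by
        rw [← euclideanFinOneIsometry.norm_map x, Real.norm_eq_abs, abs_eq zero_le_one]
        simp
  rw [Nat.card_congr e, Nat.card_coe_set_eq, Set.ncard_pair (by norm_num)]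

instance : Finite (sphereSpace 0) :=
  Nat.finite_of_card_ne_zero (by rw [card_sphereSpace_zero]; norm_num)

instance : Unique (discSpace 0) where
  default := ⟨0, by simp⟩
  uniq x := Subtype.ext (Subsingleton.elim (α := EuclideanSpace ℝ (Fin 0)) _ _)

noncomputable def discSpaceOneHomeoIcc : discSpace 1 ≃ₜ Set.Icc (-1 : ℝ) 1 :=
  Homeomorph.subtype (p := fun x : EuclideanSpace ℝ (Fin 1) => ‖x‖ ≤ 1 ∧ (0 : ℤ) ≤ 1)
    euclideanFinOneIsometry.toHomeomorph fun x => by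
      rw [← euclideanFinOneIsometry.norm_map x, Real.norm_eq_abs, abs_le]
      simp

instance : ConnectedSpace (discSpace 1) :=
  have := Subtype.connectedSpace (isConnected_Icc (show (-1 : ℝ) ≤ 1 by norm_num))
  discSpaceOneHomeoIcc.symm.surjective.connectedSpace discSpaceOneHomeoIcc.symm.continuous

lemma nonempty_homeomorph_of_card_eq {α β : Type*} [TopologicalSpace α] [TopologicalSpace β]
    [T1Space α] [T1Space β] (h : Nat.card α = Nat.card β) (hβ : Nat.card β ≠ 0) :
    Nonempty (α ≃ₜ β) := by
  have : Finite α := Nat.finite_of_card_ne_zero (h ▸ hβ)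
  have : Finite β := Nat.finite_of_card_ne_zero hβ
  obtain ⟨e⟩ := Finite.card_eq.1 h
  exact ⟨⟨e, continuous_of_discreteTopology, continuous_of_discreteTopology⟩⟩

end ModelSpaces

section ZeroDimensional

variable {V : Type*} {K : Set (Finset V)}

lemma isComplex_of_forall_card_eq_one (h : ∀ σ ∈ K, σ.card = 1) : IsComplex K := by
  intro σ hσ
  obtain ⟨v, rfl⟩ := Finset.card_eq_one.1 (h σ hσ)
  refine ⟨Finset.singleton_ne_empty v, fun τ hτ hne => ?_⟩
  rcases Finset.subset_singleton_iff.1 hτ with rfl | rfl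
  exacts [absurd rfl hne, hσ]

lemma link_eq_empty_of_maximal (hK : IsComplex K) {σ : Finset V}
    (hmax : ∀ τ ∈ K, σ ⊆ τ → τ = σ) : link K σ = ∅ := by
  refine Set.eq_empty_of_forall_notMem fun τ ⟨hτ, hdisj, hunion⟩ => (hK τ hτ).1 ?_
  have hsub : τ ⊆ σ := hmax _ hunion Finset.subset_union_left ▸ Finset.subset_union_right
  exact Finset.disjoint_self_iff_empty _ |>.1 (Finset.disjoint_of_subset_left hsub hdisj)

lemma nonempty_homeomorph_empty_sphereSpace {m : ℤ} (hm : m < 0) :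
    Nonempty (spc (∅ : Set (Finset V)) ≃ₜ sphereSpace m) :=
  have := isEmpty_sphereSpace hm
  ⟨Homeomorph.empty⟩

lemma card_spc_of_forall_card_eq_one (h : ∀ σ ∈ K, σ.card = 1) :
    Nat.card (spc K) = {v | ({v} : Finset V) ∈ K}.ncard := by
  rw [← Nat.card_coe_set_eq]
  refine (Nat.card_eq_of_bijective (fun v : {v | ({v} : Finset V) ∈ K} => spc.vertex v.2)
    ⟨fun u v huv => Subtype.ext (spc.vertex_inj.1 huv), fun w => ?_⟩).symm
  obtain ⟨v, hv⟩ := Finset.card_eq_one.1 (h _ w.2.1)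
  exact ⟨⟨v, show ({v} : Finset V) ∈ K from hv ▸ w.2.1⟩, (spc.eq_vertex hv).symm⟩

lemma nonempty_homeomorph_sphereSpace_zero_pair {a b : V} (hab : a ≠ b) :
    Nonempty (spc ({{a}, {b}} : Set (Finset V)) ≃ₜ sphereSpace 0) := by
  refine nonempty_homeomorph_of_card_eq ?_ (by simp [card_sphereSpace_zero])
  rw [card_spc_of_forall_card_eq_one (by simp), card_sphereSpace_zero, ← Set.ncard_pair hab]
  congr 1
  ext
  simp

lemma card_spc_singleton (a : V) : Nat.card (spc ({{a}} : Set (Finset V))) = 1 := by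
  rw [card_spc_of_forall_card_eq_one (by simp)]
  simp

lemma nonempty_homeomorph_discSpace_zero_singleton (a : V) :
    Nonempty (spc ({{a}} : Set (Finset V)) ≃ₜ discSpace 0) :=
  nonempty_homeomorph_of_card_eq (by simp [card_spc_singleton]) (by simp)

lemma not_nonempty_homeomorph_sphereSpace_zero_singleton (a : V) :
    ¬ Nonempty (spc ({{a}} : Set (Finset V)) ≃ₜ sphereSpace 0) := fun ⟨e⟩ => by
  simpa [card_spc_singleton, card_sphereSpace_zero] using Nat.card_congr e.toEquiv

lemma isCombTriSphere_pair {a b : V} (hab : a ≠ b) :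
    IsCombTriSphere 0 ({{a}, {b}} : Set (Finset V)) := by
  have hcard : ∀ σ ∈ ({{a}, {b}} : Set (Finset V)), σ.card = 1 := by simp
  have hK := isComplex_of_forall_card_eq_one hcard
  refine ⟨hK, nonempty_homeomorph_sphereSpace_zero_pair hab, fun σ hσ => ?_⟩
  rw [link_eq_empty_of_maximal hK fun τ hτ hστ =>
    (Finset.eq_of_subset_of_card_le hστ (by rw [hcard σ hσ, hcard τ hτ])).symm, hcard σ hσ]
  exact nonempty_homeomorph_empty_sphereSpace (by norm_num)

/-- A path in the discrete space `sphereSpace 0` is constant, so no simplex of `K` has two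
vertices. -/
lemma eq_pair_of_homeomorph_sphereSpace_zero (hK : IsComplex K) (e : spc K ≃ₜ sphereSpace 0) :
    ∃ a b : V, a ≠ b ∧ K = {{a}, {b}} := by
  have hcard : ∀ σ ∈ K, σ.card = 1 := by
    intro σ hσ
    refine le_antisymm (Finset.card_le_one.2 fun u hu v hv => ?_)
      (Finset.card_pos.2 (Finset.nonempty_of_ne_empty (hK σ hσ).1))
    obtain ⟨γ⟩ := (joined_of_support_subset hK hσ
      (w₁ := spc.vertex (singleton_mem_of_mem hK hσ hu))
      (w₂ := spc.vertex (singleton_mem_of_mem hK hσ hv)) (by simpa using hu)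
      (by simpa using hv)).map e.continuous
    have := (isPreconnected_range γ.continuous).subsingleton
      ⟨0, γ.source⟩ ⟨1, γ.target⟩
    exact spc.vertex_inj.1 (e.injective this)
  have h2 : {v | ({v} : Finset V) ∈ K}.ncard = 2 := by
    rw [← card_spc_of_forall_card_eq_one hcard, Nat.card_congr e.toEquiv, card_sphereSpace_zero]
  obtain ⟨a, b, hab, hS⟩ := Set.ncard_eq_two.1 h2
  refine ⟨a, b, hab, Set.ext fun σ => ⟨fun hσ => ?_, fun hσ => ?_⟩⟩
  · obtain ⟨c, rfl⟩ := Finset.card_eq_one.1 (hcard σ hσ)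
    have : c ∈ ({a, b} : Set V) := hS ▸ hσ
    rcases this with rfl | rfl <;> simp
  · have hab' : a ∈ ({a, b} : Set V) ∧ b ∈ ({a, b} : Set V) := by simp
    rw [← hS] at hab'
    rcases hσ with rfl | rfl
    exacts [hab'.1, hab'.2]

end ZeroDimensional

section PathComplex

variable {W : Type*} {n : ℕ} {ι : ℕ → W}

def pathComplex (n : ℕ) (ι : ℕ → W) : Set (Finset W) :=
  {σ | (∃ i ≤ n, σ = {ι i}) ∨ ∃ i < n, σ = {ι i, ι (i + 1)}}

lemma isComplex_pathComplex (n : ℕ) (ι : ℕ → W) : IsComplex (pathComplex n ι) := by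
  rintro σ (⟨i, hi, rfl⟩ | ⟨i, hi, rfl⟩)
  · refine ⟨Finset.singleton_ne_empty _, fun τ hτ hne => ?_⟩
    rcases Finset.subset_singleton_iff.1 hτ with rfl | rfl
    exacts [absurd rfl hne, Or.inl ⟨i, hi, rfl⟩]
  · refine ⟨Finset.insert_ne_empty _ _, fun τ hτ hne => ?_⟩
    rcases Finset.eq_of_subset_pair hτ hne with rfl | rfl | rfl
    exacts [Or.inl ⟨i, hi.le, rfl⟩, Or.inl ⟨i + 1, hi, rfl⟩, Or.inr ⟨i, hi, rfl⟩]

lemma card_le_two_of_mem_pathComplex {σ : Finset W} (hσ : σ ∈ pathComplex n ι) :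
    σ.card ≤ 2 := by
  rcases hσ with ⟨i, -, rfl⟩ | ⟨i, -, rfl⟩
  exacts [by simp, Finset.card_le_two]

/-- The barycentric coordinate of the vertex `ι i` at the point of parameter `t` of the
segment. -/
noncomputable def tent (t : ℝ) (i : ℕ) : ℝ := max 0 (1 - |t - i|)

lemma tent_natCast_add {k : ℕ} {q : ℝ} (hq : q ∈ Set.Icc (0 : ℝ) 1) (i : ℕ) :
    tent (k + q) i = (if k = i then 1 - q else 0) + (if k + 1 = i then q else 0) := by
  obtain ⟨hq0, hq1⟩ := hq
  have hfar (h : 1 ≤ |(k + q : ℝ) - i|) : tent (k + q) i = 0 := max_eq_left (by linarith)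
  rcases (by omega : i + 1 ≤ k ∨ i = k ∨ i = k + 1 ∨ k + 2 ≤ i) with hik | rfl | rfl | hik
  · have : (i : ℝ) + 1 ≤ k := by exact_mod_cast hik
    rw [if_neg (by omega), if_neg (by omega), hfar (le_abs.2 (Or.inl (by linarith)))]
    simp
  · rw [tent, if_pos rfl, if_neg (by omega), add_sub_cancel_left, abs_of_nonneg hq0]
    simp [hq1]
  · rw [tent, if_neg (by omega), if_pos rfl, abs_of_nonpos (by push_cast; linarith)]
    push_cast
    simp [hq0]
  · have : (k : ℝ) + 2 ≤ i := by exact_mod_cast hik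
    rw [if_neg (by omega), if_neg (by omega), hfar (le_abs.2 (Or.inr (by linarith)))]
    simp

noncomputable def edgePoint (ι : ℕ → W) (k : ℕ) (q : ℝ) : W →₀ ℝ :=
  Finsupp.single (ι k) (1 - q) + Finsupp.single (ι (k + 1)) q

lemma edgePoint_apply_eq_tent (hι : Function.Injective ι) {k : ℕ} {q : ℝ}
    (hq : q ∈ Set.Icc (0 : ℝ) 1) (i : ℕ) : edgePoint ι k q (ι i) = tent (k + q) i := by
  simp only [edgePoint, tent_natCast_add hq, Finsupp.add_apply, Finsupp.single_apply, hι.eq_iff]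

lemma edgePoint_apply_of_notMem_range {k : ℕ} {q : ℝ} {v : W} (hv : v ∉ Set.range ι) :
    edgePoint ι k q v = 0 := by
  simp only [Set.mem_range, not_exists] at hv
  simp [edgePoint, hv]

lemma edgePoint_eq_of_add_eq (hι : Function.Injective ι) {k k' : ℕ} {q q' : ℝ}
    (hq : q ∈ Set.Icc (0 : ℝ) 1) (hq' : q' ∈ Set.Icc (0 : ℝ) 1) (h : (k : ℝ) + q = k' + q') :
    edgePoint ι k q = edgePoint ι k' q' := by
  ext v
  by_cases hv : v ∈ Set.range ι
  · obtain ⟨i, rfl⟩ := hv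
    rw [edgePoint_apply_eq_tent hι hq, edgePoint_apply_eq_tent hι hq', h]
  · rw [edgePoint_apply_of_notMem_range hv, edgePoint_apply_of_notMem_range hv]

lemma mem_spc_edgePoint {k : ℕ} (hk : k < n) {q : ℝ} (hq : q ∈ Set.Icc (0 : ℝ) 1) :
    (edgePoint ι k q).support ∈ pathComplex n ι ∧ (∀ v, 0 ≤ edgePoint ι k q v) ∧
      ((edgePoint ι k q).sum fun _ c => c) = 1 := by
  have hsum : ((edgePoint ι k q).sum fun _ c => c) = 1 := by
    rw [edgePoint, Finsupp.sum_add_index' (fun _ => rfl) (fun _ _ _ => rfl),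
      Finsupp.sum_single_index rfl, Finsupp.sum_single_index rfl, sub_add_cancel]
  refine ⟨support_mem_of_subset (isComplex_pathComplex n ι) (Or.inr ⟨k, hk, rfl⟩)
    (Finsupp.support_add.trans (Finset.union_subset ?_ ?_)) hsum, fun v => ?_, hsum⟩
  · exact Finsupp.support_single_subset.trans (by simp)
  · exact Finsupp.support_single_subset.trans (by simp)
  · have := hq.1; have := hq.2
    simp only [edgePoint, Finsupp.add_apply, Finsupp.single_apply]
    split_ifs <;> linarith

lemma exists_eq_edgePoint (hn : 1 ≤ n) (hι : Function.Injective ι) (w : spc (pathComplex n ι)) :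
    ∃ k < n, ∃ q ∈ Set.Icc (0 : ℝ) 1, w.1 = edgePoint ι k q := by
  obtain ⟨k, hk, hsub⟩ : ∃ k < n, w.1.support ⊆ {ι k, ι (k + 1)} := by
    rcases w.2.1 with ⟨i, hi, hs⟩ | ⟨i, hi, hs⟩
    · rcases hi.lt_or_eq with hi | rfl
      · exact ⟨i, hi, by simp [hs]⟩
      · exact ⟨i - 1, by omega, by simp [hs, Nat.sub_add_cancel hn]⟩
    · exact ⟨i, hi, hs.le⟩
  have hne : ι k ≠ ι (k + 1) := hι.ne (by omega)
  have hw := spc.eq_single_add_single w hne hsub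
  refine ⟨k, hk, w.1 (ι (k + 1)), ⟨w.2.2.1 _, ?_⟩, hw⟩
  have := congrArg (· (ι k)) hw
  simp only [Finsupp.add_apply, Finsupp.single_eq_same, Finsupp.single_eq_of_ne hne] at this
  linarith [w.2.2.1 (ι k)]

noncomputable def pathParam (n : ℕ) (ι : ℕ → W) (w : W →₀ ℝ) : ℝ :=
  ∑ i ∈ Finset.range (n + 1), (i : ℝ) * w (ι i)

lemma pathParam_edgePoint (hι : Function.Injective ι) {k : ℕ} (hk : k < n) {q : ℝ}
    (hq : q ∈ Set.Icc (0 : ℝ) 1) : pathParam n ι (edgePoint ι k q) = k + q := by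
  simp only [pathParam, edgePoint_apply_eq_tent hι hq, tent_natCast_add hq, mul_add, mul_ite,
    mul_zero, Finset.sum_add_distrib, Finset.sum_ite_eq, Finset.mem_range]
  rw [if_pos (by omega), if_pos (by omega)]
  push_cast
  ring

/-- The left end `k` of an edge `[k, k + 1]` of `[0, n]` containing `t`; capped at `n - 1` so
that `t = n` lies on the last edge. -/
noncomputable def edgeIndex (n : ℕ) (t : ℝ) : ℕ := min ⌊t⌋₊ (n - 1)

lemma edgeIndex_lt (hn : 1 ≤ n) (t : ℝ) : edgeIndex n t < n :=
  (min_le_right _ _).trans_lt (by omega)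

lemma sub_edgeIndex_mem_Icc (hn : 1 ≤ n) {t : ℝ} (ht : t ∈ Set.Icc (0 : ℝ) n) :
    t - edgeIndex n t ∈ Set.Icc (0 : ℝ) 1 := by
  have hfloor := Nat.floor_le ht.1
  have hle : (edgeIndex n t : ℝ) ≤ ⌊t⌋₊ := by exact_mod_cast min_le_left _ _
  refine ⟨by linarith, ?_⟩
  rcases le_total ⌊t⌋₊ (n - 1) with h | h
  · rw [edgeIndex, min_eq_left h]
    linarith [Nat.lt_floor_add_one t]
  · rw [edgeIndex, min_eq_right h, Nat.cast_sub hn, Nat.cast_one]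
    linarith [ht.2]

lemma pathParam_mem_Icc (hn : 1 ≤ n) (hι : Function.Injective ι) (w : spc (pathComplex n ι)) :
    pathParam n ι w.1 ∈ Set.Icc (0 : ℝ) n := by
  obtain ⟨k, hk, q, hq, hw⟩ := exists_eq_edgePoint hn hι w
  have : (k : ℝ) + 1 ≤ n := by exact_mod_cast hk
  rw [hw, pathParam_edgePoint hι hk hq]
  exact ⟨by linarith [hq.1], by linarith [hq.2]⟩

noncomputable def pathComplexEquivIcc (hn : 1 ≤ n) (hι : Function.Injective ι) :
    Set.Icc (0 : ℝ) n ≃ spc (pathComplex n ι) where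
  toFun t := ⟨edgePoint ι (edgeIndex n t) (t - edgeIndex n t),
    mem_spc_edgePoint (edgeIndex_lt hn t) (sub_edgeIndex_mem_Icc hn t.2)⟩
  invFun w := ⟨pathParam n ι w.1, pathParam_mem_Icc hn hι w⟩
  left_inv t := Subtype.ext <| by
    simp only
    rw [pathParam_edgePoint hι (edgeIndex_lt hn t) (sub_edgeIndex_mem_Icc hn t.2)]
    ring
  right_inv w := by
    obtain ⟨k, hk, q, hq, hw⟩ := exists_eq_edgePoint hn hι w
    have hmem := pathParam_mem_Icc hn hι w
    refine Subtype.ext ?_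
    simp only
    rw [hw, pathParam_edgePoint hι hk hq] at hmem ⊢
    exact edgePoint_eq_of_add_eq hι (sub_edgeIndex_mem_Icc hn hmem) hq (by ring)

lemma coe_pathComplexEquivIcc_apply (hn : 1 ≤ n) (hι : Function.Injective ι)
    (t : Set.Icc (0 : ℝ) n) :
    (pathComplexEquivIcc hn hι t).1 = edgePoint ι (edgeIndex n t) (t - edgeIndex n t) := rfl

lemma continuous_pathComplexEquivIcc (hn : 1 ≤ n) (hι : Function.Injective ι) :
    Continuous (pathComplexEquivIcc hn hι) := by
  refine continuous_to_spc fun v => ?_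
  by_cases hv : v ∈ Set.range ι
  · obtain ⟨i, rfl⟩ := hv
    have (t : Set.Icc (0 : ℝ) n) : (pathComplexEquivIcc hn hι t).1 (ι i) = tent t i := by
      rw [coe_pathComplexEquivIcc_apply, edgePoint_apply_eq_tent hι (sub_edgeIndex_mem_Icc hn t.2),
        add_sub_cancel]
    simp only [this, tent]
    fun_prop
  · simp only [coe_pathComplexEquivIcc_apply, edgePoint_apply_of_notMem_range hv]
    exact continuous_const

lemma nonempty_homeomorph_pathComplex (hn : 1 ≤ n) (hι : Function.Injective ι) :
    Nonempty (spc (pathComplex n ι) ≃ₜ discSpace 1) :=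
  ⟨(continuous_pathComplexEquivIcc hn hι).homeoOfEquivCompactToT2.symm.trans <|
    (iccHomeoI (0 : ℝ) n (by exact_mod_cast hn)).trans <|
      (iccHomeoI (-1) 1 (by norm_num)).symm.trans discSpaceOneHomeoIcc.symm⟩

end PathComplex

section PathComplexLinks

variable {W : Type*} {n : ℕ} {ι : ℕ → W}

lemma pair_mem_pathComplex_iff (hι : Function.Injective ι) {i j : ℕ} (hij : i ≠ j) :
    ({ι i, ι j} : Finset W) ∈ pathComplex n ι ↔ (i + 1 = j ∧ j ≤ n) ∨ (j + 1 = i ∧ i ≤ n) := by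
  constructor
  · rintro (⟨l, -, h⟩ | ⟨l, hl, h⟩)
    · have hi : ι i ∈ ({ι l} : Finset W) := h ▸ by simp
      have hj : ι j ∈ ({ι l} : Finset W) := h ▸ by simp
      simp only [Finset.mem_singleton, hι.eq_iff] at hi hj
      omega
    · have hi : ι i ∈ ({ι l, ι (l + 1)} : Finset W) := h ▸ by simp
      have hj : ι j ∈ ({ι l, ι (l + 1)} : Finset W) := h ▸ by simp
      simp only [Finset.mem_insert, Finset.mem_singleton, hι.eq_iff] at hi hj
      omega
  · rintro (⟨rfl, hj⟩ | ⟨rfl, hi⟩)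
    · exact Or.inr ⟨i, by omega, rfl⟩
    · exact Or.inr ⟨j, by omega, Finset.pair_comm _ _⟩

lemma link_pathComplex_singleton (hι : Function.Injective ι) {i : ℕ} :
    link (pathComplex n ι) {ι i} =
      (fun j => {ι j}) '' {j | (i + 1 = j ∧ j ≤ n) ∨ (j + 1 = i ∧ i ≤ n)} := by
  ext τ
  constructor
  · rintro ⟨⟨j, hj, rfl⟩ | ⟨j, hj, rfl⟩, hdisj, hunion⟩
    · have hij : i ≠ j := by rintro rfl; simp at hdisj
      rw [← Finset.insert_eq, pair_mem_pathComplex_iff hι hij] at hunion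
      exact ⟨j, hunion, rfl⟩
    · have hcard := card_le_two_of_mem_pathComplex hunion
      rw [Finset.card_union_of_disjoint hdisj, Finset.card_pair (hι.ne (by omega))] at hcard
      simp at hcard
  · rintro ⟨j, (hadj : (i + 1 = j ∧ j ≤ n) ∨ (j + 1 = i ∧ i ≤ n)), rfl⟩
    have hij : i ≠ j := by omega
    refine ⟨Or.inl ⟨j, by omega, rfl⟩, by simp [hι.ne hij], ?_⟩
    rwa [← Finset.insert_eq, pair_mem_pathComplex_iff hι hij]

lemma link_pathComplex_zero (hn : 1 ≤ n) (hι : Function.Injective ι) :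
    link (pathComplex n ι) {ι 0} = {{ι 1}} := by
  rw [link_pathComplex_singleton hι, ← Set.image_singleton (f := fun j => ({ι j} : Finset W))]
  refine congrArg _ (Set.ext fun j => ?_)
  simp only [Set.mem_ofPred_eq, Set.mem_singleton_iff]
  omega

lemma link_pathComplex_last (hn : 1 ≤ n) (hι : Function.Injective ι) :
    link (pathComplex n ι) {ι n} = {{ι (n - 1)}} := by
  rw [link_pathComplex_singleton hι, ← Set.image_singleton (f := fun j => ({ι j} : Finset W))]
  refine congrArg _ (Set.ext fun j => ?_)
  simp only [Set.mem_ofPred_eq, Set.mem_singleton_iff]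
  omega

lemma link_pathComplex_of_pos_of_lt (hι : Function.Injective ι) {i : ℕ} (hi₀ : 0 < i)
    (hin : i < n) : link (pathComplex n ι) {ι i} = {{ι (i - 1)}, {ι (i + 1)}} := by
  rw [link_pathComplex_singleton hι, ← Set.image_pair (fun j => ({ι j} : Finset W))]
  refine congrArg _ (Set.ext fun j => ?_)
  simp only [Set.mem_ofPred_eq, Set.mem_insert_iff, Set.mem_singleton_iff]
  omega

lemma link_pathComplex_pair (hι : Function.Injective ι) {i : ℕ} :
    link (pathComplex n ι) {ι i, ι (i + 1)} = ∅ :=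
  link_eq_empty_of_maximal (isComplex_pathComplex n ι) fun τ hτ hsub =>
    (Finset.eq_of_subset_of_card_le hsub (by
      rw [Finset.card_pair (hι.ne (by omega))]
      exact card_le_two_of_mem_pathComplex hτ)).symm

lemma sphere_link_pathComplex_iff (hn : 1 ≤ n) (hι : Function.Injective ι) {σ : Finset W}
    (hσ : σ ∈ pathComplex n ι) :
    Nonempty (spc (link (pathComplex n ι) σ) ≃ₜ sphereSpace (1 - σ.card)) ↔
      σ ≠ {ι 0} ∧ σ ≠ {ι n} := by
  rcases hσ with ⟨i, hi, rfl⟩ | ⟨i, hi, rfl⟩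
  · rw [Finset.card_singleton, Nat.cast_one, sub_self]
    simp only [ne_eq, Finset.singleton_inj, hι.eq_iff]
    rcases (by omega : i = 0 ∨ i = n ∨ (0 < i ∧ i < n)) with rfl | rfl | ⟨hi₀, hin⟩
    · rw [link_pathComplex_zero hn hι]
      exact iff_of_false (not_nonempty_homeomorph_sphereSpace_zero_singleton _) (by simp)
    · rw [link_pathComplex_last hn hι]
      exact iff_of_false (not_nonempty_homeomorph_sphereSpace_zero_singleton _) (by simp)
    · rw [link_pathComplex_of_pos_of_lt hι hi₀ hin]
      simpa [hi₀.ne', hin.ne] using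
        nonempty_homeomorph_sphereSpace_zero_pair (hι.ne (by omega : i - 1 ≠ i + 1))
  · have hcard := Finset.card_pair (hι.ne (by omega : i ≠ i + 1))
    rw [link_pathComplex_pair hι, hcard]
    refine iff_of_true (nonempty_homeomorph_empty_sphereSpace (by norm_num)) ⟨?_, ?_⟩ <;>
      exact fun h => by simp [h] at hcard

lemma isCombTriDisc_pathComplex (hn : 1 ≤ n) (hι : Function.Injective ι) :
    IsCombTriDisc 1 (pathComplex n ι) := by
  refine ⟨isComplex_pathComplex n ι, nonempty_homeomorph_pathComplex hn hι, fun σ hσ => ?_⟩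
  by_cases h : σ ≠ {ι 0} ∧ σ ≠ {ι n}
  · exact Or.inl ((sphere_link_pathComplex_iff hn hι hσ).2 h)
  right
  rcases not_and_or.1 h with h | h <;>
    rw [not_ne_iff.1 h, Finset.card_singleton, Nat.cast_one, sub_self]
  · rw [link_pathComplex_zero hn hι]
    exact nonempty_homeomorph_discSpace_zero_singleton (ι 1)
  · rw [link_pathComplex_last hn hι]
    exact nonempty_homeomorph_discSpace_zero_singleton (ι (n - 1))

lemma discBoundary_pathComplex (hn : 1 ≤ n) (hι : Function.Injective ι) :
    discBoundary 1 (pathComplex n ι) = {{ι 0}, {ι n}} := by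
  ext σ
  simp only [discBoundary, Set.mem_ofPred_eq, Set.mem_insert_iff, Set.mem_singleton_iff]
  constructor
  · rintro ⟨hσ, hns⟩
    by_contra h
    exact hns ((sphere_link_pathComplex_iff hn hι hσ).2 (not_or.1 h))
  · intro h
    have hσ : σ ∈ pathComplex n ι := by
      rcases h with rfl | rfl
      exacts [Or.inl ⟨0, by omega, rfl⟩, Or.inl ⟨n, le_rfl, rfl⟩]
    exact ⟨hσ, fun hs => by have := (sphere_link_pathComplex_iff hn hι hσ).1 hs; tauto⟩

end PathComplexLinks

section Extensions

variable {U : Type} {X : Set (Finset U)}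

lemma isSimplicial_pathComplex_of_walk (hX : IsComplex X) {W : Type*} {ι : ℕ → W} {F : W → U}
    {u v : U} (p : (edgeGraph X).Walk u v) (hp : p.length ≠ 0)
    (hF : ∀ i, F (ι i) = p.getVert i) : IsSimplicial (pathComplex p.length ι) X F := by
  rintro σ (⟨i, hi, rfl⟩ | ⟨i, hi, rfl⟩)
  · rw [Finset.image_singleton, hF]
    rcases hi.lt_or_eq with hi | rfl
    · exact singleton_mem_of_adj hX (p.adj_getVert_succ hi)
    · have := (p.adj_getVert_succ (Nat.sub_one_lt hp)).symm
      rw [Nat.sub_add_cancel (Nat.one_le_iff_ne_zero.2 hp)] at this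
      exact singleton_mem_of_adj hX this
  · rw [Finset.image_insert, Finset.image_singleton, hF, hF]
    exact (p.adj_getVert_succ hi).2

lemma locInj_pathComplex_of_walk {W : Type*} {ι : ℕ → W} (hι : Function.Injective ι)
    {F : W → U} {u v : U} (p : (edgeGraph X).Walk u v) (hF : ∀ i, F (ι i) = p.getVert i) :
    LocInj (pathComplex p.length ι) F := by
  rintro σ (⟨i, -, rfl⟩ | ⟨i, hi, rfl⟩)
  · simp
  · rw [Finset.image_insert, Finset.image_singleton, hF, hF,
      Finset.card_pair (p.adj_getVert_succ hi).1, Finset.card_pair (hι.ne (by omega))]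

lemma eq_empty_of_isCombTriSphere {V : Type*} {K : Set (Finset V)} {m : ℤ} (hm : m < 0)
    (hK : IsCombTriSphere m K) : K = ∅ := by
  obtain ⟨e⟩ := hK.2.1
  have := isEmpty_sphereSpace hm
  have := e.isEmpty
  exact eq_empty_of_isEmpty_spc hK.1

lemma isCombTriSphere_empty {V : Type*} {m : ℤ} (hm : m < 0) :
    IsCombTriSphere m (∅ : Set (Finset V)) :=
  ⟨fun _ h => h.elim, nonempty_homeomorph_empty_sphereSpace hm, fun _ h => h.elim⟩

lemma isCombTriDisc_empty {V : Type*} {m : ℤ} (hm : m < 0) :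
    IsCombTriDisc m (∅ : Set (Finset V)) :=
  have := isEmpty_discSpace hm
  ⟨fun _ h => h.elim, ⟨Homeomorph.empty⟩, fun _ h => h.elim⟩

lemma link_singleton_self {V : Type*} (v : V) : link ({{v}} : Set (Finset V)) {v} = ∅ :=
  link_eq_empty_of_maximal (isComplex_of_forall_card_eq_one (by simp)) (by simp)

lemma isCombTriDisc_singleton {V : Type*} (v : V) : IsCombTriDisc 0 ({{v}} : Set (Finset V)) := by
  refine ⟨isComplex_of_forall_card_eq_one (by simp),
    nonempty_homeomorph_discSpace_zero_singleton v, fun σ hσ => Or.inl ?_⟩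
  rw [Set.mem_singleton_iff.1 hσ, link_singleton_self]
  exact nonempty_homeomorph_empty_sphereSpace (by simp)

lemma discBoundary_singleton {V : Type*} (v : V) : discBoundary 0 ({{v}} : Set (Finset V)) = ∅ := by
  refine Set.eq_empty_of_forall_notMem fun σ ⟨hσ, hns⟩ => hns ?_
  rw [Set.mem_singleton_iff.1 hσ, link_singleton_self]
  exact nonempty_homeomorph_empty_sphereSpace (by simp)

lemma extendsToDisc_of_lt_neg_one {V : Type} {K : Set (Finset V)} {f : V → U} {m : ℤ}
    (hm : m < -1) (hK : IsCombTriSphere m K) : ExtendsToDisc X m K f := by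
  obtain rfl := eq_empty_of_isCombTriSphere (by omega) hK
  refine ⟨V, ∅, id, f, isCombTriDisc_empty (by omega), Function.injective_id, fun _ h => h.elim,
    ?_, fun _ => rfl, fun _ h => h.elim, fun _ h => h.elim⟩
  rw [Set.image_empty]
  exact (Set.eq_empty_of_forall_notMem fun σ h => h.1.elim).symm

lemma extendsToDisc_neg_one {V : Type} {K : Set (Finset V)} {f : V → U} {u₀ : U}
    (hu₀ : ({u₀} : Finset U) ∈ X) (hK : IsCombTriSphere (-1) K) : ExtendsToDisc X (-1) K f := by
  obtain rfl := eq_empty_of_isCombTriSphere (by norm_num) hK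
  refine ⟨Option V, {{none}}, some, fun w => w.elim u₀ f, ?_, Option.some_injective V,
    fun _ h => h.elim, ?_, fun _ => rfl, fun σ hσ => ?_, fun σ hσ => ?_⟩
  · rw [show (-1 : ℤ) + 1 = 0 by norm_num]
    exact isCombTriDisc_singleton none
  · rw [Set.image_empty, show (-1 : ℤ) + 1 = 0 by norm_num, discBoundary_singleton]
  · rw [Set.mem_singleton_iff.1 hσ, Finset.image_singleton]
    exact hu₀
  · simp [Set.mem_singleton_iff.1 hσ]

lemma extendsToDisc_zero (hX : IsComplex X) (hwalk : NontrivialWalkConnected X) {V : Type}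
    {K : Set (Finset V)} {f : V → U} (hK : IsCombTriSphere 0 K) (hf : IsSimplicial K X f) :
    ExtendsToDisc X 0 K f := by
  obtain ⟨a, b, hab, rfl⟩ := eq_pair_of_homeomorph_sphereSpace_zero hK.1 hK.2.1.some
  obtain ⟨p, hp⟩ := hwalk (f a) (f b) (by simpa using hf {a} (by simp))
    (by simpa using hf {b} (by simp))
  set n := p.length
  let ι (i : ℕ) : V ⊕ ℕ := if i = 0 then .inl a else if i = n then .inl b else .inr i
  have hι0 : ι 0 = .inl a := if_pos rfl
  have hιn : ι n = .inl b := by simp [ι, hp]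
  have hι : Function.Injective ι := by
    intro i j h
    simp only [ι] at h
    split_ifs at h <;> simp_all
  have hF (i : ℕ) : Sum.elim f p.getVert (ι i) = p.getVert i := by
    simp only [ι]
    split_ifs with h0 hn
    · simp [h0]
    · simp [hn, n]
    · rfl
  have hn : 1 ≤ n := Nat.one_le_iff_ne_zero.2 hp
  refine ⟨V ⊕ ℕ, pathComplex n ι, Sum.inl, Sum.elim f p.getVert, ?_, Sum.inl_injective, ?_, ?_,
    fun _ => rfl, isSimplicial_pathComplex_of_walk hX p hp hF,
    locInj_pathComplex_of_walk hι p hF⟩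
  · rw [zero_add]
    exact isCombTriDisc_pathComplex hn hι
  · rintro σ (rfl | rfl)
    · exact Or.inl ⟨0, by omega, by rw [hι0]; rfl⟩
    · exact Or.inl ⟨n, le_rfl, by rw [hιn]; rfl⟩
  · rw [zero_add, discBoundary_pathComplex hn hι, Set.image_pair, hι0, hιn]
    congr

end Extensions

section Necessity

variable {U : Type} {X : Set (Finset U)}

lemma nonempty_of_hasDiscLII {d : ℤ} (h : HasDiscLII X d) (hd : -1 ≤ d) : X.Nonempty := by
  obtain ⟨W, L, -, F, hL, -, -, -, -, hF, -⟩ :=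
    h (-1) hd PEmpty ∅ PEmpty.elim (isCombTriSphere_empty (by norm_num)) (fun _ h => h.elim)
      (fun _ h => h.elim)
  obtain ⟨e⟩ := hL.2.1
  rw [show (-1 : ℤ) + 1 = 0 by norm_num] at e
  exact ⟨_, hF _ (e.symm default).2.1⟩

lemma nontrivialWalkConnected_of_hasDiscLII {d : ℤ} (h : HasDiscLII X d) (hd : 0 ≤ d) :
    NontrivialWalkConnected X := by
  intro u u' hu hu'
  obtain ⟨W, L, j, F, hL, hj, hjK, -, hFj, hF, hloc⟩ :=
    h 0 hd Bool {{true}, {false}} (fun c => cond c u u') (isCombTriSphere_pair (by decide))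
      (by rintro σ (rfl | rfl) <;> simpa) (by rintro σ (rfl | rfl) <;> simp)
  obtain ⟨e⟩ := hL.2.1
  rw [zero_add] at e
  have := e.symm.surjective.connectedSpace e.symm.continuous
  obtain ⟨q⟩ := reachable_of_connectedSpace hL.1 (by simpa using hjK {true} (by simp))
    (by simpa using hjK {false} (by simp))
  have h₁ : edgeGraphHom hF hloc (j true) = u := hFj true
  have h₂ : edgeGraphHom hF hloc (j false) = u' := hFj false
  refine ⟨(q.map (edgeGraphHom hF hloc)).copy h₁ h₂, ?_⟩
  simp only [SimpleGraph.Walk.length_copy, SimpleGraph.Walk.length_map]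
  exact fun h0 => Bool.true_eq_false.mp (hj (SimpleGraph.Walk.eq_of_length_eq_zero h0))

lemma connected_and_two_vertices_iff (hX : IsComplex X) :
    (X.Nonempty ∧ ConnectedSpace (spc X) ∧
        ∃ a b : U, a ≠ b ∧ ({a} : Finset U) ∈ X ∧ ({b} : Finset U) ∈ X) ↔
      X.Nonempty ∧ NontrivialWalkConnected X := by
  constructor
  · rintro ⟨hne, hconn, a, b, hab, ha, hb⟩
    refine ⟨hne, fun u u' hu hu' => ?_⟩
    obtain ⟨c, hc, hcu⟩ : ∃ c, ({c} : Finset U) ∈ X ∧ c ≠ u := by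
      by_cases hau : a = u
      · exact ⟨b, hb, hau ▸ hab.symm⟩
      · exact ⟨a, ha, hau⟩
    obtain ⟨p⟩ := reachable_of_connectedSpace hX hu hc
    obtain ⟨p'⟩ := reachable_of_connectedSpace hX hc hu'
    refine ⟨p.append p', ?_⟩
    rw [SimpleGraph.Walk.length_append]
    exact fun h0 =>
      hcu (SimpleGraph.Walk.eq_of_length_eq_zero (Nat.eq_zero_of_add_eq_zero_right h0)).symm
  · rintro ⟨hne, hwalk⟩
    refine ⟨hne, connectedSpace_spc hX hne fun u v hu hv => (hwalk u v hu hv).elim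
      fun p _ => p.reachable, ?_⟩
    obtain ⟨σ, hσ⟩ := hne
    obtain ⟨u, hu⟩ := Finset.nonempty_of_ne_empty (hX σ hσ).1
    have huX := singleton_mem_of_mem hX hσ hu
    obtain ⟨p, hp⟩ := hwalk u u huX huX
    have hadj := p.adj_getVert_succ (Nat.pos_of_ne_zero hp)
    rw [SimpleGraph.Walk.getVert_zero] at hadj
    exact ⟨u, _, hadj.ne, huX, singleton_mem_of_adj hX hadj.symm⟩

end Necessity

/-- A simplicial complex `X` has the disc local injectivity property
up to dimension `0` if and only if `X` is nonempty, connected, and has more than one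
vertex. -/
theorem stmt2 {U : Type} (X : Set (Finset U)) (hX : IsComplex X) :
    HasDiscLII X 0 ↔
      (X.Nonempty ∧ ConnectedSpace (spc X) ∧
        ∃ a b : U, a ≠ b ∧ ({a} : Finset U) ∈ X ∧ ({b} : Finset U) ∈ X) := by
  rw [connected_and_two_vertices_iff hX]
  refine ⟨fun h => ⟨nonempty_of_hasDiscLII h (by norm_num),
    nontrivialWalkConnected_of_hasDiscLII h le_rfl⟩, ?_⟩
  rintro ⟨⟨σ, hσ⟩, hwalk⟩ m hm V K f hK hf -
  obtain ⟨u₀, hu₀⟩ := Finset.nonempty_of_ne_empty (hX σ hσ).1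
  rcases (by omega : m < -1 ∨ m = -1 ∨ m = 0) with hm | rfl | rfl
  · exact extendsToDisc_of_lt_neg_one hm hK
  · exact extendsToDisc_neg_one (singleton_mem_of_mem hX hσ hu₀) hK
  · exact extendsToDisc_zero hX hwalk hK hf
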